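/- (Additional power, full-rank-above-threshold case.) Under the hypotheses of the additional-power theorem with K = s, i.e., Σ, Σ̂ real symmetric positive semidefinite n×n, Σ of rank s ≥ 1 with eigenvalues λ₁ ≥ ⋯ ≥ λ_s ≥ χ > 0 and λ_k = 0 for k > s, δ₀ := ‖Σ̂ − Σ‖ ≤ χ/4^{s+1}, δ_s = 4^s·δ₀, P_ideal = Σ_{k=1}^{s} σ²(1/χ − 1/λ_k) and P_mismatch = Σ_{k ≤ s, λ̂_k > χ − δ_s} σ²(1/(χ − δ_s) − 1/λ̂_k), where λ̂₁ ≥ ⋯ ≥ λ̂_n are the eigenvalues of Σ̂, one has P_mismatch < P_ideal + (323/816)·(σ²/χ)·s. -/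

import Mathlib

open MeasureTheory ProbabilityTheory Matrix BigOperators

/-- Spectral (ℓ²-operator) norm of a real square matrix. -/
noncomputable def specNorm {n : ℕ} (A : Matrix (Fin n) (Fin n) ℝ) : ℝ :=
  ‖LinearMap.toContinuousLinearMap (Matrix.toEuclideanLin A)‖

/-!
By Weyl's inequality `λ̂ₖ ≤ λₖ + δ₀`. Since `δ₀ ≤ χ/16` and `δₛ ≤ χ/4`, lowering the threshold from
`χ` to `χ - δₛ` costs at most `1/(3χ)` per measurement and replacing `λₖ` by `λ̂ₖ` less than
`1/(16χ)`, so each of the at most `s` terms of `P_mismatch` exceeds its term in `P_ideal` by less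
than `(1/3 + 1/16) σ²/χ = (19/48) σ²/χ = (323/816) σ²/χ`.
-/

open scoped RealInnerProductSpace

namespace OrthonormalBasis

variable {ι E : Type*} [Fintype ι] [NormedAddCommGroup E] [InnerProductSpace ℝ E]
  (v : OrthonormalBasis ι ℝ E)

theorem inner_apply_eq_sum_of_apply_eq_smul {T : E →ₗ[ℝ] E} {μ : ι → ℝ}
    (hT : ∀ i, T (v i) = μ i • v i) (x : E) :
    ⟪x, T x⟫ = ∑ i, μ i * ⟪v i, x⟫ ^ 2 := by
  have hTx : T x = ∑ i, (⟪v i, x⟫ * μ i) • v i := by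
    conv_lhs => rw [← v.sum_repr' x]
    simp only [map_sum, map_smul, hT, smul_smul]
  rw [hTx, inner_sum]
  refine Finset.sum_congr rfl fun i _ => ?_
  rw [real_inner_smul_right, real_inner_comm]
  ring

theorem inner_eq_zero_of_mem_span_image {I : Set ι} {i : ι} (hi : i ∉ I) {x : E}
    (hx : x ∈ Submodule.span ℝ (v '' I)) : ⟪v i, x⟫ = 0 := by
  refine (Submodule.span_le (p := LinearMap.ker (innerₛₗ ℝ (v i)))).mpr ?_ hx
  rintro _ ⟨j, hj, rfl⟩
  exact v.orthonormal.2 fun hij => hi (hij ▸ hj)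

theorem finrank_span_image (I : Finset ι) :
    Module.finrank ℝ (Submodule.span ℝ (v '' I)) = I.card := by
  have := finrank_span_eq_card (b := fun i : (I : Set ι) => v i)
    (v.orthonormal.linearIndependent.comp _ Subtype.val_injective)
  rw [← Set.image_eq_range] at this
  simpa using this

theorem sum_sq_inner_eq_norm_sq_of_mem_span_image {I : Finset ι} {x : E}
    (hx : x ∈ Submodule.span ℝ (v '' I)) : ∑ i ∈ I, ⟪v i, x⟫ ^ 2 = ‖x‖ ^ 2 := by
  rw [← v.sum_sq_inner_right, Finset.sum_subset (Finset.subset_univ I)]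
  intro i _ hi
  rw [v.inner_eq_zero_of_mem_span_image (by simpa using hi) hx, sq, zero_mul]

variable {T : E →ₗ[ℝ] E} {μ : ι → ℝ}

theorem inner_apply_eq_sum_of_mem_span_image (hT : ∀ i, T (v i) = μ i • v i)
    {I : Finset ι} {x : E}
    (hx : x ∈ Submodule.span ℝ (v '' I)) : ⟪x, T x⟫ = ∑ i ∈ I, μ i * ⟪v i, x⟫ ^ 2 := by
  rw [v.inner_apply_eq_sum_of_apply_eq_smul hT, Finset.sum_subset (Finset.subset_univ I)]
  intro i _ hi
  rw [v.inner_eq_zero_of_mem_span_image (by simpa using hi) hx, sq, mul_zero, mul_zero]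

theorem mul_norm_sq_le_inner_apply_of_mem_span_image (hT : ∀ i, T (v i) = μ i • v i)
    {I : Finset ι} {c : ℝ}
    (hc : ∀ i ∈ I, c ≤ μ i) {x : E} (hx : x ∈ Submodule.span ℝ (v '' I)) :
    c * ‖x‖ ^ 2 ≤ ⟪x, T x⟫ := by
  rw [v.inner_apply_eq_sum_of_mem_span_image hT hx,
    ← v.sum_sq_inner_eq_norm_sq_of_mem_span_image hx, Finset.mul_sum]
  exact Finset.sum_le_sum fun i hi => by gcongr; exact hc i hi

theorem inner_apply_le_mul_norm_sq_of_mem_span_image (hT : ∀ i, T (v i) = μ i • v i)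
    {I : Finset ι} {c : ℝ}
    (hc : ∀ i ∈ I, μ i ≤ c) {x : E} (hx : x ∈ Submodule.span ℝ (v '' I)) :
    ⟪x, T x⟫ ≤ c * ‖x‖ ^ 2 := by
  rw [v.inner_apply_eq_sum_of_mem_span_image hT hx,
    ← v.sum_sq_inner_eq_norm_sq_of_mem_span_image hx, Finset.mul_sum]
  exact Finset.sum_le_sum fun i hi => by gcongr; exact hc i hi

end OrthonormalBasis

theorem Submodule.exists_mem_inf_ne_zero_of_finrank_lt {K V : Type*} [DivisionRing K]
    [AddCommGroup V] [Module K V] [FiniteDimensional K V] {p q : Submodule K V}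
    (h : Module.finrank K V < Module.finrank K p + Module.finrank K q) :
    ∃ x ∈ p, x ∈ q ∧ x ≠ 0 := by
  by_contra! hpq
  exact h.not_ge (finrank_add_finrank_le_of_disjoint (disjoint_def.mpr hpq))

/-- Weyl's inequality. The spans of the eigenvectors of `B` for `b 0, …, b k` and of those of `A`
for `a k, …, a (n-1)` have dimensions adding up to `n + 1`, so they share a nonzero vector `x`,
and `b k ‖x‖² ≤ ⟪x, B x⟫ = ⟪x, A x⟫ + ⟪x, (B - A) x⟫ ≤ (a k + C) ‖x‖²`. -/
theorem LinearMap.eigenvalue_le_eigenvalue_add_of_inner_sub_le {E : Type*}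
    [NormedAddCommGroup E] [InnerProductSpace ℝ E] [FiniteDimensional ℝ E] {n : ℕ}
    {A B : E →ₗ[ℝ] E} {vA vB : OrthonormalBasis (Fin n) ℝ E} {a b : Fin n → ℝ}
    (ha : Antitone a) (hb : Antitone b)
    (hA : ∀ i, A (vA i) = a i • vA i) (hB : ∀ i, B (vB i) = b i • vB i)
    {C : ℝ} (hC : ∀ x, ⟪x, (B - A) x⟫ ≤ C * ‖x‖ ^ 2) (k : Fin n) :
    b k ≤ a k + C := by
  have hdim : Module.finrank ℝ E < Module.finrank ℝ (Submodule.span ℝ (vB '' ↑(Finset.Iic k)))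
      + Module.finrank ℝ (Submodule.span ℝ (vA '' ↑(Finset.Ici k))) := by
    rw [vA.finrank_span_image, vB.finrank_span_image, Fin.card_Iic, Fin.card_Ici,
      Module.finrank_eq_card_basis vA.toBasis, Fintype.card_fin]
    omega
  obtain ⟨x, hxB, hxA, hx0⟩ := Submodule.exists_mem_inf_ne_zero_of_finrank_lt hdim
  have hBx : b k * ‖x‖ ^ 2 ≤ ⟪x, B x⟫ :=
    vB.mul_norm_sq_le_inner_apply_of_mem_span_image hB
      (fun i hi => hb (Finset.mem_Iic.mp hi)) hxB
  have hAx : ⟪x, A x⟫ ≤ a k * ‖x‖ ^ 2 :=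
    vA.inner_apply_le_mul_norm_sq_of_mem_span_image hA
      (fun i hi => ha (Finset.mem_Ici.mp hi)) hxA
  have hsplit : ⟪x, B x⟫ = ⟪x, A x⟫ + ⟪x, (B - A) x⟫ := by
    rw [LinearMap.sub_apply, inner_sub_right]
    ring
  have hquad : b k * ‖x‖ ^ 2 ≤ (a k + C) * ‖x‖ ^ 2 :=
    calc b k * ‖x‖ ^ 2 ≤ ⟪x, B x⟫ := hBx
      _ = ⟪x, A x⟫ + ⟪x, (B - A) x⟫ := hsplit
      _ ≤ a k * ‖x‖ ^ 2 + C * ‖x‖ ^ 2 := add_le_add hAx (hC x)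
      _ = (a k + C) * ‖x‖ ^ 2 := by ring
  exact le_of_mul_le_mul_right hquad (by positivity)

theorem inner_toEuclideanLin_le_specNorm_mul {n : ℕ} (M : Matrix (Fin n) (Fin n) ℝ)
    (x : EuclideanSpace ℝ (Fin n)) :
    ⟪x, toEuclideanLin M x⟫ ≤ specNorm M * ‖x‖ ^ 2 :=
  calc ⟪x, toEuclideanLin M x⟫ ≤ ‖x‖ * ‖toEuclideanLin M x‖ := real_inner_le_norm _ _
    _ ≤ ‖x‖ * (specNorm M * ‖x‖) :=
        mul_le_mul_of_nonneg_left
          ((LinearMap.toContinuousLinearMap (toEuclideanLin M)).le_opNorm x) (norm_nonneg x)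
    _ = specNorm M * ‖x‖ ^ 2 := by ring

theorem Matrix.IsHermitian.toEuclideanLin_eigenvectorBasis {n : Type*} [Fintype n]
    [DecidableEq n] {A : Matrix n n ℝ} (hA : A.IsHermitian) (i : n) :
    toEuclideanLin A (hA.eigenvectorBasis i) = hA.eigenvalues i • hA.eigenvectorBasis i := by
  ext j
  simpa using congrFun (hA.mulVec_eigenvectorBasis i) j

theorem Matrix.IsHermitian.sorted_eigenvalue_le_add_specNorm {n : ℕ}
    {A B : Matrix (Fin n) (Fin n) ℝ} (hA : A.IsHermitian) (hB : B.IsHermitian)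
    {a b : Fin n → ℝ} (ha : Antitone a)
    (hae : ∃ e : Equiv.Perm (Fin n), ∀ i, a i = hA.eigenvalues (e i))
    (hb : Antitone b) (hbe : ∃ e : Equiv.Perm (Fin n), ∀ i, b i = hB.eigenvalues (e i))
    (k : Fin n) : b k ≤ a k + specNorm (B - A) := by
  obtain ⟨ea, hea⟩ := hae
  obtain ⟨eb, heb⟩ := hbe
  refine LinearMap.eigenvalue_le_eigenvalue_add_of_inner_sub_le
    (A := toEuclideanLin A) (B := toEuclideanLin B)
    (vA := hA.eigenvectorBasis.reindex ea.symm) (vB := hB.eigenvectorBasis.reindex eb.symm)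
    ha hb (fun i => ?_) (fun i => ?_) (fun x => ?_) k
  · simp [hea, hA.toEuclideanLin_eigenvectorBasis]
  · simp [heb, hB.toEuclideanLin_eigenvectorBasis]
  · rw [← map_sub]
    exact inner_toEuclideanLin_le_specNorm_mul (B - A) x

theorem Fin.card_filter_val_lt_le (n s : ℕ) :
    (Finset.univ.filter fun k : Fin n => (k : ℕ) < s).card ≤ s :=
  (Finset.card_le_card_of_injOn Fin.val (t := Finset.range s)
    (fun k hk => by simpa using hk) Fin.val_injective.injOn).trans (Finset.card_range s).le

theorem Finset.sum_lt_sum_add_mul_of_card_le {ι : Type*} {F G : Finset ι} (hFG : F ⊆ G)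
    {f g : ι → ℝ} {c : ℝ} {m : ℕ} (hc : 0 < c) (hm : 0 < m) (hG : G.card ≤ m)
    (hg : ∀ k ∈ G, 0 ≤ g k) (hfg : ∀ k ∈ F, f k < g k + c) :
    ∑ k ∈ F, f k < ∑ k ∈ G, g k + c * m := by
  rcases F.eq_empty_or_nonempty with rfl | hF_ne
  · rw [Finset.sum_empty]
    exact add_pos_of_nonneg_of_pos (Finset.sum_nonneg hg) (by positivity)
  calc ∑ k ∈ F, f k < ∑ k ∈ F, (g k + c) := Finset.sum_lt_sum_of_nonempty hF_ne hfg
    _ = ∑ k ∈ F, g k + c * F.card := by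
        rw [Finset.sum_add_distrib, Finset.sum_const, nsmul_eq_mul, mul_comm]
    _ ≤ ∑ k ∈ G, g k + c * m :=
        add_le_add (Finset.sum_le_sum_of_subset_of_nonneg hFG fun k hk _ => hg k hk)
          (mul_le_mul_of_nonneg_left (by exact_mod_cast (card_le_card hFG).trans hG) hc.le)

theorem one_div_sub_one_div_lt_of_le_add {χ δ δ' l lh : ℝ} (hχ : 0 < χ) (hδ : δ ≤ χ / 16)
    (hδ' : δ' ≤ χ / 4) (hl : χ ≤ l) (hlh : lh ≤ l + δ) (hlh' : χ - δ' < lh) :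
    1 / (χ - δ') - 1 / lh < 1 / χ - 1 / l + 19 / 48 * (1 / χ) := by
  have hl0 : 0 < l := hχ.trans_le hl
  have hlh0 : 0 < lh := by linarith
  have hthreshold : 1 / (χ - δ') ≤ 4 / 3 * (1 / χ) :=
    calc 1 / (χ - δ') ≤ 1 / (3 / 4 * χ) := one_div_le_one_div_of_le (by positivity) (by linarith)
      _ = 4 / 3 * (1 / χ) := by field_simp
  have heigen : 1 / l - 1 / lh < 1 / 16 * (1 / χ) := by
    rcases le_or_gt lh l with h | h
    · have := one_div_le_one_div_of_le hlh0 h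
      have : 0 < 1 / 16 * (1 / χ) := by positivity
      linarith
    · rw [div_sub_div _ _ hl0.ne' hlh0.ne', div_lt_iff₀ (by positivity)]
      field_simp
      calc (lh - l) * 16 * χ ≤ χ * χ := mul_le_mul_of_nonneg_right (by linarith) hχ.le
        _ < l * lh := mul_lt_mul' hl (hl.trans_lt h) hχ.le hl0
        _ = lh * l := mul_comm _ _
  linarith

theorem stmt10_general {n s : ℕ} (hs : 1 ≤ s)
    (σ χ : ℝ) (hσ : 0 < σ) (hχ : 0 < χ)
    (S Shat : Matrix (Fin n) (Fin n) ℝ) (hS : S.PosSemidef) (hShat : Shat.PosSemidef)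
    -- `lam` enumerates the eigenvalues of `S` in decreasing order
    (lam : Fin n → ℝ) (hlam_anti : Antitone lam)
    (hlam_eig : ∃ e : Equiv.Perm (Fin n), ∀ i, lam i = hS.1.eigenvalues (e i))
    -- `lamhat` enumerates the eigenvalues of `Shat` in decreasing order
    (lamhat : Fin n → ℝ) (hlamhat_anti : Antitone lamhat)
    (hlamhat_eig : ∃ e : Equiv.Perm (Fin n), ∀ i, lamhat i = hShat.1.eigenvalues (e i))
    -- the first s eigenvalues are ≥ χ, the rest vanish
    (habove : ∀ k : Fin n, (k : ℕ) < s → χ ≤ lam k)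
    (δ0 δs : ℝ) (hδ0 : δ0 = specNorm (Shat - S)) (hδ0small : δ0 ≤ χ / 4 ^ (s + 1))
    (hδs : δs = 4 ^ s * δ0)
    (Pideal Pmismatch : ℝ)
    (hPideal : Pideal = ∑ k ∈ Finset.univ.filter (fun k : Fin n => (k : ℕ) < s),
      σ ^ 2 * (1 / χ - 1 / lam k))
    (hPmismatch : Pmismatch = ∑ k ∈ Finset.univ.filter
        (fun k : Fin n => (k : ℕ) < s ∧ χ - δs < lamhat k),
      σ ^ 2 * (1 / (χ - δs) - 1 / lamhat k)) :
    Pmismatch < Pideal + (323 / 816) * (σ ^ 2 / χ) * s := by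
  have hweyl : ∀ k, lamhat k ≤ lam k + δ0 := hδ0 ▸
    hS.1.sorted_eigenvalue_le_add_specNorm hShat.1 hlam_anti hlam_eig hlamhat_anti hlamhat_eig
  have hδ0_nonneg : 0 ≤ δ0 := hδ0 ▸ norm_nonneg _
  have hδs_le : δs ≤ χ / 4 :=
    calc δs = 4 ^ s * δ0 := hδs
      _ ≤ 4 ^ s * (χ / 4 ^ (s + 1)) := by gcongr
      _ = χ / 4 := by rw [pow_succ]; field_simp
  have hδ0_le : δ0 ≤ χ / 16 := by
    have : 4 * δ0 ≤ δs :=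
      hδs ▸ mul_le_mul_of_nonneg_right (le_self_pow₀ (by norm_num) (by omega)) hδ0_nonneg
    linarith
  rw [hPmismatch, hPideal]
  refine Finset.sum_lt_sum_add_mul_of_card_le (fun k hk =>
      Finset.mem_filter.mpr ⟨Finset.mem_univ k, (Finset.mem_filter.mp hk).2.1⟩)
    (by positivity) hs (Fin.card_filter_val_lt_le n s) (fun k hk => ?_) (fun k hk => ?_)
  · have hk : χ ≤ lam k := habove k (Finset.mem_filter.mp hk).2
    exact mul_nonneg (sq_nonneg σ) (sub_nonneg.mpr (one_div_le_one_div_of_le hχ hk))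
  · obtain ⟨hks, hk⟩ := (Finset.mem_filter.mp hk).2
    calc σ ^ 2 * (1 / (χ - δs) - 1 / lamhat k)
        < σ ^ 2 * (1 / χ - 1 / lam k + 19 / 48 * (1 / χ)) := by
          gcongr
          exact one_div_sub_one_div_lt_of_le_add hχ hδ0_le hδs_le (habove k hks) (hweyl k) hk
      _ = σ ^ 2 * (1 / χ - 1 / lam k) + 323 / 816 * (σ ^ 2 / χ) := by ring

/-- Additional power, full-rank-above-threshold case `K = s`. -/
theorem stmt10 {n s : ℕ} (hs : 1 ≤ s)
    (σ χ : ℝ) (hσ : 0 < σ) (hχ : 0 < χ)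
    (S Shat : Matrix (Fin n) (Fin n) ℝ) (hS : S.PosSemidef) (hShat : Shat.PosSemidef)
    (hrank : S.rank = s)
    -- `lam` enumerates the eigenvalues of `S` in decreasing order
    (lam : Fin n → ℝ) (hlam_anti : Antitone lam)
    (hlam_eig : ∃ e : Equiv.Perm (Fin n), ∀ i, lam i = hS.1.eigenvalues (e i))
    -- `lamhat` enumerates the eigenvalues of `Shat` in decreasing order
    (lamhat : Fin n → ℝ) (hlamhat_anti : Antitone lamhat)
    (hlamhat_eig : ∃ e : Equiv.Perm (Fin n), ∀ i, lamhat i = hShat.1.eigenvalues (e i))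
    -- the first s eigenvalues are ≥ χ, the rest vanish
    (habove : ∀ k : Fin n, (k : ℕ) < s → χ ≤ lam k)
    (hzero : ∀ k : Fin n, s ≤ (k : ℕ) → lam k = 0)
    (δ0 δs : ℝ) (hδ0 : δ0 = specNorm (Shat - S)) (hδ0small : δ0 ≤ χ / 4 ^ (s + 1))
    (hδs : δs = 4 ^ s * δ0)
    (Pideal Pmismatch : ℝ)
    (hPideal : Pideal = ∑ k ∈ Finset.univ.filter (fun k : Fin n => (k : ℕ) < s),
      σ ^ 2 * (1 / χ - 1 / lam k))
    (hPmismatch : Pmismatch = ∑ k ∈ Finset.univ.filter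
        (fun k : Fin n => (k : ℕ) < s ∧ χ - δs < lamhat k),
      σ ^ 2 * (1 / (χ - δs) - 1 / lamhat k)) :
    Pmismatch < Pideal + (323 / 816) * (σ ^ 2 / χ) * s :=
  stmt10_general hs σ χ hσ hχ S Shat hS hShat lam hlam_anti hlam_eig lamhat hlamhat_anti hlamhat_eig
    habove δ0 δs hδ0 hδ0small hδs Pideal Pmismatch hPideal hPmismatch
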